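/- (Weak duality of RegBayes.) Let (M, 𝓑) be a measurable space, p a nonzero finite measure on M, T ≥ 1, ψ : M → ℝ^T a bounded measurable function, and g : ℝ^T → ℝ ∪ {+∞} any function, with Fenchel conjugate g*(y) := sup_{x ∈ ℝ^T} (⟨y, x⟩ − g(x)) valued in ℝ ∪ {±∞}. Then for every probability measure q ≪ p such that ψ is q-integrable and log(dq/dp) is q-integrable, and for every φ ∈ ℝ^T, one has (as extended reals): ∫ log(dq/dp) dq + g(∫ ψ dq) ≥ −log ∫ exp(⟨φ, ψ(m)⟩) dp(m) − g*(−φ). -/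

import Mathlib

/-!
Tilting `p` by `exp ⟪φ, ψ⟫` gives a probability measure `p_φ` with
`KL(q ‖ p_φ) = KL(q ‖ p) - ⟪φ, E_q ψ⟫ + log ∫ exp ⟪φ, ψ⟫ dp`, so Gibbs' inequality
`KL(q ‖ p_φ) ≥ 0` is the Donsker–Varadhan bound `KL(q ‖ p) ≥ ⟪φ, E_q ψ⟫ - log ∫ exp ⟪φ, ψ⟫ dp`.
Adding the Fenchel–Young inequality `g(E_q ψ) ≥ ⟪-φ, E_q ψ⟫ - g*(-φ)` gives the claim.
-/

open MeasureTheory Real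

/-- `klDivR q p = ∫ log(dq/dp) dq`, the Kullback–Leibler divergence (real-valued); for an
unnormalized finite reference measure `p` the same formula is used. -/
noncomputable def klDivR {M : Type*} [MeasurableSpace M] (q p : Measure M) : ℝ :=
  ∫ m, Real.log ((q.rnDeriv p) m).toReal ∂q

section GibbsVariational

variable {α : Type*} [MeasurableSpace α] {μ ν : Measure α} {f : α → ℝ}

lemma MeasureTheory.Measure.AbsolutelyContinuous.neZero [NeZero μ] (hμν : μ ≪ ν) : NeZero ν :=
  ⟨fun hν ↦ NeZero.ne μ (Measure.absolutelyContinuous_zero_iff.mp (hν ▸ hμν))⟩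

lemma integral_llr_nonneg [IsProbabilityMeasure μ] [IsProbabilityMeasure ν] (hμν : μ ≪ ν)
    (h_int : Integrable (llr μ ν) μ) : 0 ≤ ∫ x, llr μ ν x ∂μ := by
  simpa using InformationTheory.integral_llr_add_sub_measure_univ_nonneg hμν h_int

lemma integral_sub_log_integral_exp_le_integral_llr [IsProbabilityMeasure μ] [SigmaFinite ν]
    (hμν : μ ≪ ν) (hfμ : Integrable f μ) (hfν : Integrable (fun x ↦ exp (f x)) ν)
    (h_int : Integrable (llr μ ν) μ) :
    ∫ x, f x ∂μ - log (∫ x, exp (f x) ∂ν) ≤ ∫ x, llr μ ν x ∂μ := by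
  have := hμν.neZero
  have := isProbabilityMeasure_tilted hfν
  have h_gibbs := integral_llr_nonneg (hμν.trans (absolutelyContinuous_tilted hfν))
    (integrable_llr_tilted_right hμν hfμ h_int hfν)
  rw [integral_llr_tilted_right hμν hfμ hfν h_int] at h_gibbs
  linarith

lemma integrable_exp_of_le [IsFiniteMeasure ν] (hf : Measurable f) {C : ℝ} (hC : ∀ x, f x ≤ C) :
    Integrable (fun x ↦ exp (f x)) ν :=
  .of_bound hf.exp.aestronglyMeasurable (exp C) <| .of_forall fun x ↦ by
    simpa [abs_of_pos (exp_pos _)] using hC x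

end GibbsVariational

section FenchelConjugate

variable {E : Type*} [NormedAddCommGroup E] [InnerProductSpace ℝ E]

noncomputable def fenchelConjugate (g : E → EReal) (y : E) : EReal :=
  ⨆ x, ((inner ℝ y x : ℝ) : EReal) - g x

lemma inner_sub_le_fenchelConjugate (g : E → EReal) (x y : E) :
    ((inner ℝ y x : ℝ) : EReal) - g x ≤ fenchelConjugate g y :=
  le_iSup (fun x ↦ ((inner ℝ y x : ℝ) : EReal) - g x) x

lemma coe_sub_fenchelConjugate_le (g : E → EReal) (x y : E) (a : ℝ) :
    (a : EReal) - fenchelConjugate g y ≤ ((a - inner ℝ y x : ℝ) : EReal) + g x := by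
  calc (a : EReal) - fenchelConjugate g y ≤ a - ((inner ℝ y x : ℝ) - g x) :=
        EReal.sub_le_sub le_rfl (inner_sub_le_fenchelConjugate g x y)
    _ = ((a - inner ℝ y x : ℝ) : EReal) + g x := by
      rw [sub_eq_add_neg, EReal.neg_sub (by simp) (by simp), ← add_assoc, EReal.coe_sub,
        sub_eq_add_neg]

end FenchelConjugate

theorem stmt6_general {M : Type*} [MeasurableSpace M] (p : Measure M) [IsFiniteMeasure p]
    (T : ℕ)
    (ψ : M → EuclideanSpace ℝ (Fin T)) (hψ : Measurable ψ)
    (B : ℝ) (hψB : ∀ m, ‖ψ m‖ ≤ B)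
    (g : EuclideanSpace ℝ (Fin T) → EReal)
    (q : Measure M) [IsProbabilityMeasure q] (hq : q ≪ p)
    (hψq : Integrable ψ q)
    (hllr : Integrable (fun m => Real.log ((q.rnDeriv p) m).toReal) q)
    (φ : EuclideanSpace ℝ (Fin T)) :
    ((klDivR q p : ℝ) : EReal) + g (∫ m, ψ m ∂q)
      ≥ ((-Real.log (∫ m, Real.exp ((inner ℝ φ (ψ m) : ℝ)) ∂p) : ℝ) : EReal)
          - ⨆ x : EuclideanSpace ℝ (Fin T), (((inner ℝ (-φ) x : ℝ) : EReal) - g x) := by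
  have hexp : Integrable (fun m ↦ exp (inner ℝ φ (ψ m))) p :=
    integrable_exp_of_le (measurable_const.inner hψ) fun m ↦
      (real_inner_le_norm φ (ψ m)).trans (mul_le_mul_of_nonneg_left (hψB m) (norm_nonneg φ))
  have hDV : ∫ m, inner ℝ φ (ψ m) ∂q - log (∫ m, exp (inner ℝ φ (ψ m)) ∂p) ≤ klDivR q p :=
    integral_sub_log_integral_exp_le_integral_llr hq (hψq.const_inner φ) hexp hllr
  rw [integral_inner hψq] at hDV
  calc _ ≤ ((_ - inner ℝ (-φ) (∫ m, ψ m ∂q) : ℝ) : EReal) + g (∫ m, ψ m ∂q) :=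
        coe_sub_fenchelConjugate_le g _ (-φ) _
    _ ≤ ((klDivR q p : ℝ) : EReal) + g (∫ m, ψ m ∂q) := by
      gcongr
      rw [inner_neg_left]
      linarith

/-- Weak duality of RegBayes: for a nonzero finite reference measure `p`, bounded
measurable features `ψ : M → ℝ^T`, and any regularizer `g : ℝ^T → ℝ ∪ {+∞}` with Fenchel
conjugate `g*(y) = sup_x (⟨y,x⟩ − g x)` (valued in the extended reals), every feasible
probability measure `q` and every dual vector `φ` satisfy, as extended reals,
`KL(q‖p) + g(∫ ψ dq) ≥ −log ∫ exp ⟨φ,ψ⟩ dp − g*(−φ)`. -/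
theorem stmt6 {M : Type*} [MeasurableSpace M] (p : Measure M) [IsFiniteMeasure p]
    (hp : p ≠ 0) (T : ℕ) (hT : 1 ≤ T)
    (ψ : M → EuclideanSpace ℝ (Fin T)) (hψ : Measurable ψ)
    (B : ℝ) (hψB : ∀ m, ‖ψ m‖ ≤ B)
    (g : EuclideanSpace ℝ (Fin T) → EReal) (hg : ∀ x, g x ≠ ⊥)
    (q : Measure M) [IsProbabilityMeasure q] (hq : q ≪ p)
    (hψq : Integrable ψ q)
    (hllr : Integrable (fun m => Real.log ((q.rnDeriv p) m).toReal) q)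
    (φ : EuclideanSpace ℝ (Fin T)) :
    ((klDivR q p : ℝ) : EReal) + g (∫ m, ψ m ∂q)
      ≥ ((-Real.log (∫ m, Real.exp ((inner ℝ φ (ψ m) : ℝ)) ∂p) : ℝ) : EReal)
          - ⨆ x : EuclideanSpace ℝ (Fin T), (((inner ℝ (-φ) x : ℝ) : EReal) - g x) :=
  stmt6_general p T ψ hψ B hψB g q hq hψq hllr φ
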